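/- arXiv:2401.11364 — 4 statements merged into one kernel-verified Lean document; each statement's English description precedes it below -/
import Mathlib

section
/- Let F be a commutative ring, and let p be a multivariate polynomial in n variables over F that is homogeneous of degree d ≥ 1. Then there exist d−1 polynomials Δ¹p, Δ²p, …, Δ^{d−1}p, each in 2n variables and of total degree at most d, such that for all vectors x, y ∈ Fⁿ and every scalar r ∈ F, p(x + r·y) = p(x) + r^d · p(y) + Σ_{k=1}^{d−1} r^k · (Δ^k p)(x, y). -/
open MvPolynomial Finset

namespace Stmt0Aux

variable {F : Type*} [CommRing F] {n : ℕ}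

/-- weight: count degree in the second block of variables. -/
noncomputable def w (n : ℕ) : Fin n ⊕ Fin n → ℕ := Sum.elim (fun _ => 0) (fun _ => 1)

lemma weight_eq (m : (Fin n ⊕ Fin n) →₀ ℕ) :
    (Finsupp.weight (w n)) m = ∑ b, m (Sum.inr b) := by
  rw [Finsupp.weight_apply, Finsupp.sum_fintype _ _ (by simp)]
  rw [Fintype.sum_sum_type]
  simp [w]

lemma degree_eq (m : (Fin n ⊕ Fin n) →₀ ℕ) :
    (Finsupp.weight (1 : Fin n ⊕ Fin n → ℕ)) m
      = (∑ a, m (Sum.inl a)) + ∑ b, m (Sum.inr b) := by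
  rw [Finsupp.weight_apply, Finsupp.sum_fintype _ _ (by simp), Fintype.sum_sum_type]
  simp only [Pi.one_apply, smul_eq_mul, mul_one]

lemma degree_eq' (m : (Fin n ⊕ Fin n) →₀ ℕ) :
    m.sum (fun _ c => c) = (∑ a, m (Sum.inl a)) + ∑ b, m (Sum.inr b) := by
  rw [Finsupp.sum_fintype _ _ (by simp), Fintype.sum_sum_type]

/-- scaling in the second block of variables for weighted-homogeneous polynomials -/
lemma scale_eval (k : ℕ) (φ : MvPolynomial (Fin n ⊕ Fin n) F)
    (hφ : φ.IsWeightedHomogeneous (w n) k) (x y : Fin n → F) (r : F) :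
    MvPolynomial.eval (Sum.elim x fun i => r * y i) φ
      = r ^ k * MvPolynomial.eval (Sum.elim x y) φ := by
  rw [eval_eq', eval_eq', Finset.mul_sum]
  apply Finset.sum_congr rfl
  intro m hm
  have hk : ∑ b, m (Sum.inr b) = k := by
    rw [← weight_eq]; exact hφ (mem_support_iff.mp hm)
  rw [Fintype.prod_sum_type, Fintype.prod_sum_type]
  simp only [Sum.elim_inl, Sum.elim_inr, mul_pow, Finset.prod_mul_distrib,
    Finset.prod_pow_eq_pow_sum, hk]
  ring

end Stmt0Aux

/-- Proposition on cross terms, homogeneous case.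
If `p` is a multivariate polynomial in `n` variables over a commutative ring `F`,
homogeneous of degree `d ≥ 1`, then there are `d - 1` polynomials
`Δ¹p, …, Δ^{d-1}p` in `2n` variables (indexed here by `k ∈ Icc 1 (d-1)`),
each of total degree at most `d`, such that for all `x y : Fⁿ` and `r : F`,
`p(x + r·y) = p(x) + r^d · p(y) + ∑_{k=1}^{d-1} r^k · (Δ^k p)(x, y)`. -/
theorem stmt0 (F : Type*) [CommRing F] (n d : ℕ) (hd : 1 ≤ d)
    (p : MvPolynomial (Fin n) F) (hp : p.IsHomogeneous d) :
    ∃ Δ : ℕ → MvPolynomial (Fin n ⊕ Fin n) F,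
      (∀ k ∈ Finset.Icc 1 (d - 1), (Δ k).totalDegree ≤ d) ∧
      ∀ (x y : Fin n → F) (r : F),
        MvPolynomial.eval (fun i => x i + r * y i) p =
          MvPolynomial.eval x p + r ^ d * MvPolynomial.eval y p +
            ∑ k ∈ Finset.Icc 1 (d - 1),
              r ^ k * MvPolynomial.eval (Sum.elim x y) (Δ k) := by
  classical
  open Stmt0Aux in
  set g : Fin n → MvPolynomial (Fin n ⊕ Fin n) F :=
    fun i => X (Sum.inl i) + X (Sum.inr i) with hg
  set q : MvPolynomial (Fin n ⊕ Fin n) F := MvPolynomial.bind₁ g p with hqdef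
  have hq : q.IsHomogeneous d := by
    have := hp.aeval g (n := 1) (fun i =>
      (isHomogeneous_X F (Sum.inl i : Fin n ⊕ Fin n)).add (isHomogeneous_X F (Sum.inr i)))
    rw [one_mul] at this
    exact this
  set Δ : ℕ → MvPolynomial (Fin n ⊕ Fin n) F :=
    fun k => weightedHomogeneousComponent (w n) k q with hΔ
  -- each monomial of q has total degree d
  have hdeg : ∀ m ∈ q.support, (∑ a, m (Sum.inl a)) + ∑ b, m (Sum.inr b) = d := by
    intro m hm
    rw [← degree_eq]
    exact hq (mem_support_iff.mp hm)
  -- monomials of Δ k are monomials of q with weight k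
  have hsupp : ∀ k, ∀ m ∈ (Δ k).support, m ∈ q.support ∧ ∑ b, m (Sum.inr b) = k := by
    intro k m hm
    rw [mem_support_iff, hΔ, coeff_weightedHomogeneousComponent] at hm
    split_ifs at hm with h
    · exact ⟨mem_support_iff.mpr hm, by rw [← weight_eq]; exact h⟩
    · exact absurd rfl hm
  have hwh : ∀ k, (Δ k).IsWeightedHomogeneous (w n) k :=
    fun k => weightedHomogeneousComponent_isWeightedHomogeneous k q
  -- Δ k = 0 for k > d
  have hzero : ∀ k, d < k → Δ k = 0 := by
    intro k hk
    apply weightedHomogeneousComponent_eq_zero'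
    intro m hm
    rw [weight_eq]
    have := hdeg m hm
    omega
  -- q is the finite sum of its components
  have hsub : Function.support (fun k => Δ k) ⊆ ↑(Finset.range (d + 1)) := by
    intro k hk
    simp only [Function.mem_support, ne_eq] at hk
    have hkd : k ≤ d := by
      by_contra h
      exact hk (hzero k (by omega))
    exact Finset.mem_coe.mpr (Finset.mem_range.mpr (by omega))
  have hqsum : q = ∑ k ∈ Finset.range (d + 1), Δ k := by
    conv_lhs => rw [← sum_weightedHomogeneousComponent (w n) q]
    exact finsum_eq_sum_of_support_subset _ hsub
  -- evaluation of q
  have hevq : ∀ v : Fin n ⊕ Fin n → F,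
      MvPolynomial.eval v q = MvPolynomial.eval (fun i => v (Sum.inl i) + v (Sum.inr i)) p := by
    intro v
    have h := eval₂Hom_bind₁ (RingHom.id F) v g p
    have e1 : ∀ (σ : Type) [Fintype σ] (u : σ → F),
        (eval₂Hom (RingHom.id F) u : MvPolynomial σ F →+* F) = eval u := fun _ _ _ => rfl
    rw [e1, e1] at h
    rw [hqdef, h]
    have e2 : (fun i => (MvPolynomial.eval v) (g i)) = fun i => v (Sum.inl i) + v (Sum.inr i) := by
      funext i
      simp [hg]
    rw [e2]
  -- main evaluation identity over range (d+1)
  have main : ∀ (x y : Fin n → F) (r : F),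
      MvPolynomial.eval (fun i => x i + r * y i) p
        = ∑ k ∈ Finset.range (d + 1), r ^ k * MvPolynomial.eval (Sum.elim x y) (Δ k) := by
    intro x y r
    have h1 : MvPolynomial.eval (fun i => x i + r * y i) p
        = MvPolynomial.eval (Sum.elim x fun i => r * y i) q := by
      rw [hevq]; simp
    rw [h1, hqsum, map_sum]
    apply Finset.sum_congr rfl
    intro k _
    exact scale_eval k (Δ k) (hwh k) x y r
  -- eval of Δ 0 is eval x p
  have hΔ0 : ∀ (x y : Fin n → F), MvPolynomial.eval (Sum.elim x y) (Δ 0) = MvPolynomial.eval x p := by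
    intro x y
    have h0 := main x y 0
    rw [Finset.sum_range_succ'] at h0
    simp only [pow_zero, one_mul, pow_succ, mul_zero, zero_mul, Finset.sum_const_zero,
      zero_add, add_zero] at h0
    simpa using h0.symm
  -- Δ d only involves the second block: eval (x,y) Δ d = eval y p
  have hΔd : ∀ (x y : Fin n → F),
      MvPolynomial.eval (Sum.elim x y) (Δ d) = MvPolynomial.eval y p := by
    intro x y
    -- first: eval (Sum.elim x y) (Δ d) = eval (Sum.elim 0 y) (Δ d)
    have hindep : MvPolynomial.eval (Sum.elim x y) (Δ d)
        = MvPolynomial.eval (Sum.elim (fun _ => (0:F)) y) (Δ d) := by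
      rw [eval_eq', eval_eq']
      apply Finset.sum_congr rfl
      intro m hm
      obtain ⟨hmq, hw⟩ := hsupp d m hm
      have hx : ∀ a, m (Sum.inl a) = 0 := by
        have := hdeg m hmq
        intro a
        have h0 : ∑ a, m (Sum.inl a) = 0 := by omega
        exact Finset.sum_eq_zero_iff.mp h0 a (Finset.mem_univ a)
      congr 1
      rw [Fintype.prod_sum_type, Fintype.prod_sum_type]
      simp [hx]
    rw [hindep]
    -- now evaluate q at (0, y)
    have h1 : MvPolynomial.eval (Sum.elim (fun _ => (0:F)) y) q = MvPolynomial.eval y p := by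
      rw [hevq]; simp
    rw [hqsum, map_sum] at h1
    -- all terms k < d vanish at x = 0
    have hvan : ∀ k < d, MvPolynomial.eval (Sum.elim (fun _ => (0:F)) y) (Δ k) = 0 := by
      intro k hk
      rw [eval_eq']
      apply Finset.sum_eq_zero
      intro m hm
      obtain ⟨hmq, hw⟩ := hsupp k m hm
      have hpos : 0 < ∑ a, m (Sum.inl a) := by
        have := hdeg m hmq; omega
      obtain ⟨a, ha⟩ : ∃ a, m (Sum.inl a) ≠ 0 := by
        by_contra h
        push_neg at h
        simp [Finset.sum_eq_zero (fun a _ => h a)] at hpos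
      rw [Fintype.prod_sum_type]
      have : ∏ a', (Sum.elim (fun _ => (0:F)) y (Sum.inl a')) ^ m (Sum.inl a') = 0 := by
        apply Finset.prod_eq_zero (Finset.mem_univ a)
        simp [zero_pow ha]
      rw [this, zero_mul, mul_zero]
    rw [Finset.sum_range_succ] at h1
    rw [Finset.sum_eq_zero (fun k hk => hvan k (Finset.mem_range.mp hk)), zero_add] at h1
    exact h1
  refine ⟨Δ, ?_, ?_⟩
  · intro k _
    apply Finset.sup_le
    intro m hm
    obtain ⟨hmq, _⟩ := hsupp k m hm
    rw [degree_eq']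
    have h1 := hq (mem_support_iff.mp hmq)
    rw [degree_eq] at h1
    omega
  · intro x y r
    rw [main x y r, Finset.sum_range_succ]
    have hins : Finset.range d = insert 0 (Finset.Icc 1 (d - 1)) := by
      ext k
      simp only [Finset.mem_range, Finset.mem_insert, Finset.mem_Icc]
      omega
    rw [hins, Finset.sum_insert (by simp)]
    rw [hΔ0 x y, hΔd x y]
    ring
end

section
/- Let F be a commutative ring, let p be a multivariate polynomial in m variables over F homogeneous of degree d ≥ 1 with cross-term polynomials Δ^k p satisfying p(x + r·y) = p(x) + r^d p(y) + Σ_{k=1}^{d−1} r^k (Δ^k p)(x, y). Let v⁽¹⁾, …, v⁽ᴺ⁾ ∈ F^m be witnesses with p(v⁽ⁱ⁾) = 0 for all i, and let r⁽¹⁾, …, r⁽ᴺ⁾ ∈ F be folding challenges. Define the cumulative witness and slack recursively by V₀ = 0, Eₒ = 0, and V_i = V_{i−1} + r⁽ⁱ⁾·v⁽ⁱ⁾, E_i = E_{i−1} + (r⁽ⁱ⁾)^d·0 + Σ_{k=1}^{d−1} (r⁽ⁱ⁾)^k·(Δ^k p)(V_{i−1}, v⁽ⁱ⁾). Then for every 0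 ≤ i ≤ N, p(V_i) = E_i. -/
/-- completeness of the full iterated folding protocol.
Let `p` be homogeneous of degree `d ≥ 1` in `m` variables over a commutative
ring `F`, with cross-term polynomials `Δ^k p` satisfying the folding
decomposition. Given `N` satisfying witnesses `v⁽¹⁾, …, v⁽ᴺ⁾` (`p(v⁽ⁱ⁾) = 0`)
and folding challenges `r⁽¹⁾, …, r⁽ᴺ⁾`, define the cumulative witness and slack
by `V₀ = 0`, `E₀ = 0`, `V_{i+1} = V_i + r⁽ⁱ⁾·v⁽ⁱ⁾`, and
`E_{i+1} = E_i + (r⁽ⁱ⁾)^d·0 + ∑_{k=1}^{d-1} (r⁽ⁱ⁾)^k·(Δ^k p)(V_i, v⁽ⁱ⁾)`.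
Then `p(V_i) = E_i` for every `0 ≤ i ≤ N`. -/
theorem stmt12 (F : Type*) [CommRing F] (m d N : ℕ) (hd : 1 ≤ d)
    (p : MvPolynomial (Fin m) F) (hp : p.IsHomogeneous d)
    (Δ : ℕ → MvPolynomial (Fin m ⊕ Fin m) F)
    (hΔ : ∀ (x y : Fin m → F) (r : F),
      MvPolynomial.eval (fun i => x i + r * y i) p =
        MvPolynomial.eval x p + r ^ d * MvPolynomial.eval y p +
          ∑ k ∈ Finset.Icc 1 (d - 1), r ^ k * MvPolynomial.eval (Sum.elim x y) (Δ k))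
    (v : Fin N → Fin m → F) (hv : ∀ i, MvPolynomial.eval (v i) p = 0)
    (r : Fin N → F)
    (V : ℕ → Fin m → F) (E : ℕ → F)
    (hV0 : V 0 = 0) (hE0 : E 0 = 0)
    (hV : ∀ i : Fin N, V ((i : ℕ) + 1) = fun j => V i j + r i * v i j)
    (hE : ∀ i : Fin N, E ((i : ℕ) + 1) =
      E i + (r i) ^ d * 0 +
        ∑ k ∈ Finset.Icc 1 (d - 1),
          (r i) ^ k * MvPolynomial.eval (Sum.elim (V i) (v i)) (Δ k)) :
    ∀ i ≤ N, MvPolynomial.eval (V i) p = E i := by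
  intro i hi
  induction i with
  | zero =>
    rw [hV0, hE0]
    have h0 : MvPolynomial.coeff 0 p = 0 := by
      by_contra h
      have := hp h
      simp at this
      omega
    simp [MvPolynomial.eval_zero', MvPolynomial.eval₂_zero, h0]
    exact h0
  | succ n ih =>
    have hn : n < N := by omega
    have ihn := ih (by omega)
    rw [hV ⟨n, hn⟩, hE ⟨n, hn⟩, hΔ, ihn, hv ⟨n, hn⟩]
end

section
/- Let F be a type, and let A = (a₁, …, a_m) and S = (s₁, …, s_n) be lists over F with m, n ≥ 1. Suppose there exist a list A' = (a'₁, …, a'_m) that is a permutation of A and a list S' = (s'₁, …, s'_m) all of whose entries are entries of S, such that a'₁ = s'₁ and for each 2 ≤ j ≤ m, either a'_j = a'_{j−1} or a'_j = s'_j. Then every entry of A is an entry of S. -/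
/-- soundness of the Halo2 lookup reduction.
Let `a = (a₁, …, a_m)` and `s = (s₁, …, s_n)` be vectors over `F` with
`m, n ≥ 1`. Suppose there exist a vector `a'` that is a permutation of `a`
and a vector `s'` of length `m` all of whose entries are entries of `s`,
such that `a'₁ = s'₁` and, for each `2 ≤ j ≤ m`, either `a'_j = a'_{j-1}` or
`a'_j = s'_j`. Then every entry of `a` is an entry of `s`. -/
theorem stmt15 (F : Type*) (m n : ℕ) (hm : 1 ≤ m) (hn : 1 ≤ n)
    (a : Fin m → F) (s : Fin n → F)
    (hex : ∃ a' s' : Fin m → F,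
      (∃ σ : Equiv.Perm (Fin m), ∀ i, a' i = a (σ i)) ∧
      (∀ j : Fin m, ∃ k : Fin n, s' j = s k) ∧
      a' ⟨0, hm⟩ = s' ⟨0, hm⟩ ∧
      (∀ j : Fin m, 1 ≤ (j : ℕ) →
        a' j = a' ⟨(j : ℕ) - 1, Nat.lt_of_le_of_lt (Nat.sub_le _ _) j.isLt⟩ ∨
        a' j = s' j)) :
    ∀ i : Fin m, ∃ k : Fin n, a i = s k := by
  obtain ⟨a', s', ⟨σ, hσ⟩, hs', h0, hstep⟩ := hex
  have key : ∀ N : ℕ, ∀ hN : N < m, ∃ k : Fin n, a' ⟨N, hN⟩ = s k := by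
    intro N
    induction N using Nat.strong_induction_on with
    | _ N ih =>
      intro hN
      rcases Nat.eq_zero_or_pos N with h | h
      · subst h; rw [h0]; exact hs' _
      · rcases hstep ⟨N, hN⟩ h with heq | heq
        · obtain ⟨k, hk⟩ := ih (N - 1) (Nat.sub_lt h one_pos) _
          exact ⟨k, heq.trans hk⟩
        · obtain ⟨k, hk⟩ := hs' ⟨N, hN⟩
          exact ⟨k, heq.trans hk⟩
  intro i
  obtain ⟨k, hk⟩ := key (σ.symm i) (σ.symm i).isLt
  refine ⟨k, ?_⟩
  rw [← hk, hσ, Equiv.apply_symm_apply]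
end

section
/- Let F be a linearly ordered type (or any type with decidable equality), and let A = (a₁, …, a_m) and S = (s₁, …, s_n) be lists over F with n ≥ m ≥ 1 such that every entry of A is an entry of S. Then there exist a permutation A' of A and a permutation S' of S such that, for each index j, either a'_j = a'_{j−1} (for j ≥ 2) or a'_j = s'_j, and a'₁ = s'₁. (If m < n one first pads A with n − m copies of some entry of S so both lists have length n.) -/
/-!
Group the entries of `A` by value, `A' = x₁^{k₁} x₂^{k₂} ⋯`. Only the first position of each block
has to match `S'`, so `S'` is obtained by putting one copy of `xᵢ` (which lies in `S` by the lookup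
hypothesis) at the head of the `i`-th block and filling the remaining positions with the rest of `S`
in any order.
-/

theorem Multiset.exists_subsuperset_card_eq {α : Type*} {s t : Multiset α} (hst : s ≤ t)
    {n : ℕ} (hsn : card s ≤ n) (hnt : n ≤ card t) : ∃ u, s ≤ u ∧ u ≤ t ∧ card u = n := by
  obtain ⟨r, rfl⟩ := Multiset.le_iff_exists_add.1 hst
  have hr : ((r.toList.take (n - card s) : List α) : Multiset α) ≤ r := by
    simpa using Multiset.coe_le.2 (List.take_sublist (n - card s) r.toList).subperm
  refine ⟨s + (r.toList.take (n - card s) : List α), le_add_right s _, add_le_add le_rfl hr, ?_⟩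
  simp only [card_add, coe_card, List.length_take, length_toList] at hnt ⊢
  omega

theorem Multiset.map_univ_val_getElem {α : Type*} {n : ℕ} (l : List α) (h : l.length = n) :
    map (fun j : Fin n => l[(j : ℕ)]'(h ▸ j.isLt)) Finset.univ.val = l := by
  subst h
  rw [Fin.univ_val_map, List.ofFn_getElem]

theorem Equiv.Perm.exists_eq_comp_of_map_univ_eq {ι α : Type*} [Fintype ι] {f g : ι → α}
    (h : Multiset.map f Finset.univ.val = Multiset.map g Finset.univ.val) :
    ∃ σ : Equiv.Perm ι, ∀ i, f i = g (σ i) := by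
  classical
  have hfiber (c : α) : Fintype.card {i // f i = c} = Fintype.card {i // g i = c} := by
    have hc := congrArg (Multiset.count c) h
    simp only [Multiset.count_map, eq_comm (a := c)] at hc
    simpa only [Fintype.card_subtype, Finset.card, Finset.filter_val] using hc
  let e := Equiv.ofFiberEquiv fun c => Fintype.equivOfCardEq (hfiber c)
  exact ⟨e, fun i => (Equiv.ofFiberEquiv_map _ i).symm⟩

section LookupArrangement

variable {F : Type*}

def IsLookupArrangement (A S : List F) : Prop :=
  ∀ i (hA : i < A.length) (hS : i < S.length), A[i] = S[i] ∨ (i ≠ 0 ∧ A[i] = A[i - 1])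

namespace IsLookupArrangement

theorem nil_left (S : List F) : IsLookupArrangement [] S := fun _ hA => absurd hA (by simp)

theorem replicate_cons (x : F) (C : List F) :
    IsLookupArrangement (List.replicate (C.length + 1) x) (x :: C) := by
  rintro (_ | i) hA hS
  · simp
  · simp

theorem append {A₁ S₁ A₂ S₂ : List F} (h₁ : IsLookupArrangement A₁ S₁)
    (h₂ : IsLookupArrangement A₂ S₂) (hlen : A₁.length = S₁.length) :
    IsLookupArrangement (A₁ ++ A₂) (S₁ ++ S₂) := by
  intro i hA hS
  simp only [List.length_append] at hA hS
  by_cases hi : i < A₁.length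
  · rw [List.getElem_append_left hi, List.getElem_append_left (hlen ▸ hi),
      List.getElem_append_left (by omega)]
    exact h₁ i hi (hlen ▸ hi)
  · rw [List.getElem_append_right (by omega), List.getElem_append_right (by omega)]
    simp only [← hlen]
    rcases h₂ (i - A₁.length) (by omega) (by omega) with h | ⟨hne, h⟩
    · exact Or.inl h
    · refine Or.inr ⟨by omega, ?_⟩
      rw [List.getElem_append_right (by omega), h]
      congr 1
      omega

end IsLookupArrangement

/- Peel off all `k` copies of one value `x`: the block `x^k` is matched against `x` followed by
`k - 1` fillers, and the fillers are taken from outside a multiset `T` that still contains one copy of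
each remaining value, so that the induction hypothesis applies to the rest. -/
open Multiset in
theorem exists_isLookupArrangement (α β : Multiset F) (hcard : card α = card β) (hsub : α ⊆ β) :
    ∃ A S : List F, (A : Multiset F) = α ∧ (S : Multiset F) = β ∧ IsLookupArrangement A S := by
  classical
  induction α using Multiset.strongInductionOn generalizing β with
  | ih α ih =>
  rcases α.empty_or_exists_mem with rfl | ⟨x, hx⟩
  · exact ⟨[], β.toList, rfl, β.coe_toList, .nil_left _⟩
  set B := α.filter (· ≠ x)
  have hxβ : x ∈ β := hsub hx
  have hxcount : 0 < count x α := count_pos.2 hx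
  have hsplit : α = replicate (count x α) x + B := by
    rw [← filter_eq', filter_add_not]
  have hcardα : card α = count x α + card B := by
    conv_lhs => rw [hsplit]
    simp
  have hBα : B < α := by
    refine lt_of_le_of_ne (filter_le _ _) fun h => ?_
    have : x ∈ B := h ▸ hx
    simp [B] at this
  have hBsub : B.dedup ≤ β.erase x := by
    refine (le_iff_subset (nodup_dedup B)).2 fun y hy => ?_
    obtain ⟨hyα, hyx⟩ := mem_filter.1 (mem_dedup.1 hy)
    exact (mem_erase_of_ne hyx).2 (hsub hyα)
  obtain ⟨T, hBT, hTβ, hTcard⟩ := exists_subsuperset_card_eq hBsub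
    (card_le_card (dedup_le B)) (by rw [card_erase_of_mem hxβ, Nat.pred_eq_sub_one]; omega)
  obtain ⟨B', T', hB', hT', hB'T'⟩ := ih B hBα T hTcard.symm
    fun y hy => mem_of_le hBT (mem_dedup.2 hy)
  set C := β.erase x - T
  have hCcard : C.toList.length + 1 = count x α := by
    rw [length_toList, card_sub hTβ, card_erase_of_mem hxβ, Nat.pred_eq_sub_one]
    omega
  refine ⟨List.replicate (count x α) x ++ B', x :: C.toList ++ T', ?_, ?_, ?_⟩
  · rw [← coe_add, coe_replicate, hB', ← hsplit]
  · rw [← coe_add, ← cons_coe, coe_toList, hT', cons_add, tsub_add_cancel_of_le hTβ,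
      cons_erase hxβ]
  · rw [← hCcard]
    exact (IsLookupArrangement.replicate_cons x _).append hB'T' (by simp)

end LookupArrangement

theorem stmt16_general (F : Type*) (m n : ℕ) (hm : 1 ≤ m) (hmn : m ≤ n)
    (a : Fin m → F) (s : Fin n → F)
    (hlookup : ∀ i : Fin m, ∃ k : Fin n, a i = s k) :
    ∃ (pad : Fin n) (a' s' : Fin n → F),
      (Multiset.map a' Finset.univ.val =
        Multiset.map a Finset.univ.val + Multiset.replicate (n - m) (s pad)) ∧
      (∃ σ : Equiv.Perm (Fin n), ∀ j, s' j = s (σ j)) ∧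
      a' ⟨0, Nat.lt_of_lt_of_le hm hmn⟩ = s' ⟨0, Nat.lt_of_lt_of_le hm hmn⟩ ∧
      (∀ j : Fin n, 1 ≤ (j : ℕ) →
        a' j = a' ⟨(j : ℕ) - 1, Nat.lt_of_le_of_lt (Nat.sub_le _ _) j.isLt⟩ ∨
        a' j = s' j) := by
  set pad : Fin n := ⟨0, Nat.lt_of_lt_of_le hm hmn⟩
  set α := Multiset.map a Finset.univ.val + Multiset.replicate (n - m) (s pad)
  have hsub : α ⊆ Multiset.map s Finset.univ.val := by
    intro y hy
    rcases Multiset.mem_add.1 hy with hy | hy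
    · obtain ⟨i, -, rfl⟩ := Multiset.mem_map.1 hy
      obtain ⟨k, hk⟩ := hlookup i
      exact hk ▸ Multiset.mem_map_of_mem s (Finset.mem_univ_val k)
    · exact Multiset.eq_of_mem_replicate hy ▸ Multiset.mem_map_of_mem s (Finset.mem_univ_val pad)
  have hcardα : Multiset.card α = n := by
    simp only [α, Fin.univ_val_map, Multiset.card_add, Multiset.coe_card, List.length_ofFn,
      Multiset.card_replicate]
    omega
  obtain ⟨A, S, hA, hS, hAS⟩ := exists_isLookupArrangement α _ (by simpa using hcardα) hsub
  have hAlen : A.length = n := by rw [← Multiset.coe_card, hA, hcardα]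
  have hSlen : S.length = n := by rw [← Multiset.coe_card, hS]; simp
  refine ⟨pad, fun j => A[(j : ℕ)], fun j => S[(j : ℕ)], ?_, ?_, ?_, fun j hj => ?_⟩
  · rw [Multiset.map_univ_val_getElem A hAlen, hA]
  · exact Equiv.Perm.exists_eq_comp_of_map_univ_eq
      (by rw [Multiset.map_univ_val_getElem S hSlen, hS])
  · simpa using hAS 0 (by omega) (by omega)
  · exact (hAS j (by omega) (by omega)).symm.imp (·.2) id

/-- completeness of the Halo2 lookup reduction.
Let `F` have decidable equality, and let `a = (a₁, …, a_m)`, `s = (s₁, …, s_n)`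
be vectors over `F` with `n ≥ m ≥ 1` such that every entry of `a` is an entry
of `s`. Then (padding `a` with `n − m` copies of some entry of `s` so that
both vectors have length `n`) there exist a permutation `a'` of the padded `a`
and a permutation `s'` of `s` such that `a'₁ = s'₁` and, for each `j ≥ 2`,
either `a'_j = a'_{j-1}` or `a'_j = s'_j`. (Permutations are expressed via
equality of the corresponding multisets, resp. an explicit `Equiv.Perm`.) -/
theorem stmt16 (F : Type*) [DecidableEq F] (m n : ℕ) (hm : 1 ≤ m) (hmn : m ≤ n)
    (a : Fin m → F) (s : Fin n → F)
    (hlookup : ∀ i : Fin m, ∃ k : Fin n, a i = s k) :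
    ∃ (pad : Fin n) (a' s' : Fin n → F),
      (Multiset.map a' Finset.univ.val =
        Multiset.map a Finset.univ.val + Multiset.replicate (n - m) (s pad)) ∧
      (∃ σ : Equiv.Perm (Fin n), ∀ j, s' j = s (σ j)) ∧
      a' ⟨0, Nat.lt_of_lt_of_le hm hmn⟩ = s' ⟨0, Nat.lt_of_lt_of_le hm hmn⟩ ∧
      (∀ j : Fin n, 1 ≤ (j : ℕ) →
        a' j = a' ⟨(j : ℕ) - 1, Nat.lt_of_le_of_lt (Nat.sub_le _ _) j.isLt⟩ ∨
        a' j = s' j) :=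
  stmt16_general F m n hm hmn a s hlookup
end
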